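/- arXiv:2012.06379 — 6 statements merged into one kernel-verified Lean document; each statement's English description precedes it below -/
import Mathlib

section
/- For any integer a and natural numbers b, c with c ≤ b, the identity ∏_{d=0}^{b}(a+2d) − Σ_{e=0}^{c} [ ∏_{d=0}^{b−e−1}(a+2d) · ∏_{d=b−e}^{b−1}(a+2d+1) ] = ∏_{d=0}^{b−c−1}(a+2d) · ∏_{d=b−c−1}^{b−1}(a+2d+1) holds. -/
/-! Writing `F k = (∏_{d=0}^{k} (a+2d)) · ∏_{d=k}^{b-1} (a+2d+1)`, the `e`-th summand is
`F (b-e) - F (b-e-1)`, because `a + 2k - 1 = a + 2(k-1) + 1`. The sum therefore telescopes,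
and `F b` is the first product of the identity. -/

open Finset

section Telescope

variable {R : Type*} [CommRing R] (f g : ℤ → R)

theorem prod_Icc_mul_prod_Icc_eq_sub (hfg : ∀ k, f k = g (k - 1) + 1) {k n : ℤ}
    (hk : 0 ≤ k) (hkn : k ≤ n + 1) :
    (∏ d ∈ Icc 0 (k - 1), f d) * ∏ d ∈ Icc k n, g d =
      (∏ d ∈ Icc 0 k, f d) * (∏ d ∈ Icc k n, g d) -
        (∏ d ∈ Icc 0 (k - 1), f d) * ∏ d ∈ Icc (k - 1) n, g d := by
  rw [← insert_Icc_sub_one_right_eq_Icc hk, prod_insert (by simp),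
    ← insert_Icc_left_eq_Icc_sub_one (by omega), prod_insert (by simp), hfg k]
  ring

theorem prod_Icc_sub_sum_prod_Icc_mul_prod_Icc (hfg : ∀ k, f k = g (k - 1) + 1) {b c : ℕ}
    (hcb : c ≤ b) :
    (∏ d ∈ Icc 0 (b : ℤ), f d) -
        ∑ e ∈ range (c + 1),
          (∏ d ∈ Icc 0 ((b : ℤ) - e - 1), f d) * ∏ d ∈ Icc ((b : ℤ) - e) (b - 1), g d =
      (∏ d ∈ Icc 0 ((b : ℤ) - c - 1), f d) * ∏ d ∈ Icc ((b : ℤ) - c - 1) (b - 1), g d := by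
  set F : ℤ → R := fun k ↦ (∏ d ∈ Icc 0 k, f d) * ∏ d ∈ Icc k ((b : ℤ) - 1), g d
  have hsummand : ∀ e ∈ range (c + 1),
      (∏ d ∈ Icc 0 ((b : ℤ) - e - 1), f d) * ∏ d ∈ Icc ((b : ℤ) - e) (b - 1), g d =
        F (b - e) - F (b - (e + 1 : ℕ)) := by
    intro e he_mem
    have he : (e : ℤ) ≤ b := by have := mem_range.mp he_mem; omega
    rw [prod_Icc_mul_prod_Icc_eq_sub f g hfg (by omega) (by omega)]
    simp only [F, Nat.cast_succ, sub_add_eq_sub_sub]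
  have hFb : F b = ∏ d ∈ Icc 0 (b : ℤ), f d := by simp [F]
  rw [sum_congr rfl hsummand, sum_range_sub' (fun e : ℕ ↦ F (b - e)), Nat.cast_zero, sub_zero,
    hFb, sub_sub_cancel]
  simp only [F, Nat.cast_succ, sub_add_eq_sub_sub]

end Telescope

theorem stmt0 (a : ℤ) (b c : ℕ) (hcb : c ≤ b) :
    (∏ d ∈ Finset.Icc (0 : ℤ) (b : ℤ), (a + 2 * d)) -
      ∑ e ∈ Finset.range (c + 1),
        (∏ d ∈ Finset.Icc (0 : ℤ) ((b : ℤ) - (e : ℤ) - 1), (a + 2 * d)) *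
        (∏ d ∈ Finset.Icc ((b : ℤ) - (e : ℤ)) ((b : ℤ) - 1), (a + 2 * d + 1)) =
    (∏ d ∈ Finset.Icc (0 : ℤ) ((b : ℤ) - (c : ℤ) - 1), (a + 2 * d)) *
      (∏ d ∈ Finset.Icc ((b : ℤ) - (c : ℤ) - 1) ((b : ℤ) - 1), (a + 2 * d + 1)) :=
  prod_Icc_sub_sum_prod_Icc_mul_prod_Icc (fun d ↦ a + 2 * d) (fun d ↦ a + 2 * d + 1)
    (fun k ↦ by ring) hcb
end

section
/- Let x be a word over {1,2} with digit sum |x|, written as x = 1^{β_k} 2 1^{β_{k−1}} 2 ⋯ 2 1^{β_0} where k is the number of 2s in x, and define g(x,m) = β_0 + β_1 + ⋯ + β_{m−1} + 2m − 1 for 1 ≤ m ≤ k. If x = α_1 α_2 ⋯ α_A with each α_j ∈ {1,2}, then ∏_{j=1}^{k} g(x,j) = |x|! / [α_A · (α_A + α_{A−1}) · ⋯ · (α_A + ⋯ + α_1)]. -/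
def takeBefore2 : ℕ → List ℕ → List ℕ
  | _, [] => []
  | m, a :: t =>
      if a = 2 then (if m ≤ 1 then [] else a :: takeBefore2 (m - 1) t)
      else a :: takeBefore2 m t

/-- `gval x m` is `g(x,m) = β₀ + ⋯ + β_{m-1} + 2m - 1`, computed as one plus the digit
sum of the part of `x` lying strictly to the right of the `m`-th `2` counted from the right. -/
def gval (x : List ℕ) (m : ℕ) : ℕ := 1 + (takeBefore2 m x.reverse).sum

/-!
Induct on the word by prepending its first letter `a`. The values `g(x, j)` for `j ≤ d(x)`
only see the part of `x` to the right of its `j`-th `2` from the right, so they do not change.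
The new denominator factor is `|a x|`. If `a = 1` this is also the new factor of `|a x|!`;
if `a = 2` there is one new value `g(2 x, d(x) + 1) = |x| + 1`, and `(|x| + 1)(|x| + 2)` is
the new factor of `|2 x|!`. Clearing denominators, the identity holds in `ℕ`, which also shows
that the denominator is nonzero.
-/

open Finset

@[simp]
lemma takeBefore2_two_cons (m : ℕ) (l : List ℕ) :
    takeBefore2 m (2 :: l) = if m ≤ 1 then [] else 2 :: takeBefore2 (m - 1) l := by
  simp [takeBefore2]

@[simp]
lemma takeBefore2_cons_of_ne {a : ℕ} (h : a ≠ 2) (m : ℕ) (l : List ℕ) :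
    takeBefore2 m (a :: l) = a :: takeBefore2 m l := by
  simp [takeBefore2, h]

lemma takeBefore2_append_of_le_count {m : ℕ} {l : List ℕ} (hm : 1 ≤ m) (h : m ≤ l.count 2)
    (s : List ℕ) : takeBefore2 m (l ++ s) = takeBefore2 m l := by
  induction l generalizing m with
  | nil => simp at h; omega
  | cons b l ih =>
    by_cases hb : b = 2
    · subst hb
      rw [List.count_cons_self] at h
      by_cases h1 : m ≤ 1
      · simp [h1]
      · simp [h1, ih (m := m - 1) (by omega) (by omega)]
    · rw [List.count_cons_of_ne hb] at h
      simp [hb, ih hm h]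

lemma takeBefore2_count_succ_append_two_cons (l s : List ℕ) :
    takeBefore2 (l.count 2 + 1) (l ++ 2 :: s) = l := by
  induction l with
  | nil => simp
  | cons b l ih =>
    by_cases hb : b = 2
    · subst hb
      simpa using ih
    · simpa [hb, List.count_cons_of_ne hb] using ih

lemma gval_cons_of_le_count (a : ℕ) {x : List ℕ} {j : ℕ} (h1 : 1 ≤ j) (h2 : j ≤ x.count 2) :
    gval (a :: x) j = gval x j := by
  rw [gval, gval, List.reverse_cons,
    takeBefore2_append_of_le_count h1 (by rwa [List.count_reverse])]

lemma gval_two_cons_count_succ (x : List ℕ) : gval (2 :: x) (x.count 2 + 1) = 1 + x.sum := by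
  rw [gval, List.reverse_cons, ← List.count_reverse, takeBefore2_count_succ_append_two_cons,
    List.sum_reverse]

lemma prod_gval_cons (a : ℕ) (x : List ℕ) :
    ∏ j ∈ Icc 1 (x.count 2), gval (a :: x) j = ∏ j ∈ Icc 1 (x.count 2), gval x j :=
  prod_congr rfl fun _ hj ↦ gval_cons_of_le_count a (mem_Icc.1 hj).1 (mem_Icc.1 hj).2

lemma prod_range_length_sum_drop_cons {M : Type*} [CommSemiring M] (a : M) (l : List M) :
    ∏ i ∈ range (a :: l).length, ((a :: l).drop i).sum =
      (a :: l).sum * ∏ i ∈ range l.length, (l.drop i).sum := by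
  rw [List.length_cons, prod_range_succ']
  simp [mul_comm]

theorem prod_gval_mul_prod_sum_drop (x : List ℕ) (hx : ∀ d ∈ x, d = 1 ∨ d = 2) :
    (∏ j ∈ Icc 1 (x.count 2), gval x j) * ∏ i ∈ range x.length, (x.drop i).sum =
      x.sum.factorial := by
  induction x with
  | nil => simp
  | cons a x ih =>
    specialize ih fun d hd ↦ hx d (List.mem_cons_of_mem a hd)
    rw [prod_range_length_sum_drop_cons, List.sum_cons]
    rcases hx a List.mem_cons_self with rfl | rfl
    · rw [List.count_cons_of_ne (by decide), prod_gval_cons, add_comm, Nat.factorial_succ, ← ih]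
      ring
    · rw [List.count_cons_self, prod_Icc_succ_top (by omega), prod_gval_cons,
        gval_two_cons_count_succ, show 2 + x.sum = x.sum + 1 + 1 by ring, Nat.factorial_succ,
        Nat.factorial_succ, ← ih]
      ring

theorem stmt4 (x : List ℕ) (hx : ∀ d ∈ x, d = 1 ∨ d = 2) :
    (∏ j ∈ Finset.Icc 1 (x.count 2), (gval x j : ℚ)) =
      (Nat.factorial x.sum : ℚ) /
        ∏ i ∈ Finset.range x.length, ((x.drop i).sum : ℚ) := by
  have h := prod_gval_mul_prod_sum_drop x hx
  have hD : ∏ i ∈ range x.length, (x.drop i).sum ≠ 0 :=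
    right_ne_zero_of_mul (h ▸ x.sum.factorial_ne_zero)
  rw [eq_div_iff (by exact_mod_cast hD)]
  exact_mod_cast h
end

section
/- For natural numbers X, Y, S, i with Y ≥ X ≥ i, define Ξ(X,Y,S,i) = Σ_{Δ ∈ Ω(X,Y,S)} ∏_{j=1}^{S}(e(Δ,j) − i), summing over all nonnegative trajectories from Y to X with S up-steps. Then Ξ(X,Y,S,i) = Ξ(X−i, Y−i, S, 0), where the right side sums over nonnegative trajectories from Y−i to X−i. -/
/-- The heights attained immediately after each up-step of a trajectory
(listed in order of occurrence): `e(Δ,1), …, e(Δ,S)`. -/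
def upsList (L : List ℕ) : List ℕ :=
  ((L.zip L.tail).filter (fun p => p.2 == p.1 + 1)).map Prod.snd

/-- `L` is a ±1-step trajectory (of nonnegative integers) from `Y` to `X`. -/
def IsTraj (Y X : ℕ) (L : List ℕ) : Prop :=
  L.head? = some Y ∧ L.getLast? = some X ∧
    L.Chain' (fun a b => b = a + 1 ∨ a = b + 1)

/-- `Ω(X,Y,S)`: nonnegative ±1-step trajectories from `Y` to `X` with exactly `S` up-steps. -/
def Omega (X Y S : ℕ) : Set (List ℕ) :=
  {L | IsTraj Y X L ∧ (upsList L).length = S}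

/-- `Ξ(X,Y,S) = Σ_{Δ ∈ Ω(X,Y,S)} ∏_{j=1}^{S} e(Δ,j)`. -/
noncomputable def XiZ (X Y S : ℕ) : ℤ :=
  ∑ᶠ L ∈ Omega X Y S, ((upsList L).prod : ℤ)

/-- `Ξ(X,Y,S,i) = Σ_{Δ ∈ Ω(X,Y,S)} ∏_{j=1}^{S} (e(Δ,j) - i)`. -/
noncomputable def Xi (X Y S i : ℕ) : ℤ :=
  ∑ᶠ L ∈ Omega X Y S, ((upsList L).map (fun v => (v : ℤ) - (i : ℤ))).prod

/-! A trajectory that ends at `X ≥ i` but visits a level below `i` must step up onto level `i`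
at some point, so its weight `∏ (e(Δ,j) - i)` has a zero factor. The remaining trajectories stay
at or above `i`, and shifting them down by `i` is a bijection onto `Ω(X-i, Y-i, S)` that lowers
every `e(Δ,j)` by `i`. -/

lemma upsList_cons_cons (a b : ℕ) (t : List ℕ) :
    upsList (a :: b :: t) = (if b = a + 1 then [b] else []) ++ upsList (b :: t) := by
  simp only [upsList, List.zip_cons_cons, List.tail_cons, List.filter_cons]
  split <;> simp_all

lemma upsList_map_add (i : ℕ) (L : List ℕ) :
    upsList (L.map (· + i)) = (upsList L).map (· + i) := by
  induction L with
  | nil => rfl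
  | cons a t ih =>
    cases t with
    | nil => rfl
    | cons b t =>
      simp only [List.map_cons] at ih ⊢
      have hstep : b + i = a + i + 1 ↔ b = a + 1 := by omega
      rw [upsList_cons_cons, upsList_cons_cons, ih, if_congr hstep rfl rfl]
      split_ifs <;> rfl

lemma isTraj_map_add_iff {Y X i : ℕ} {L : List ℕ} :
    IsTraj (Y + i) (X + i) (L.map (· + i)) ↔ IsTraj Y X L := by
  have hstep (a b : ℕ) : (b + i = a + i + 1 ∨ a + i = b + i + 1) ↔ (b = a + 1 ∨ a = b + 1) := by
    omega
  have hsome (o : Option ℕ) (y : ℕ) : o.map (· + i) = some (y + i) ↔ o = some y := by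
    cases o <;> simp
  simp only [IsTraj, List.Chain', List.head?_map, List.getLast?_map, List.isChain_map, hstep,
    hsome]

lemma map_add_mem_Omega_iff {X Y S i : ℕ} {L : List ℕ} :
    L.map (· + i) ∈ Omega (X + i) (Y + i) S ↔ L ∈ Omega X Y S := by
  simp only [Omega, Set.mem_ofPred_eq, isTraj_map_add_iff, upsList_map_add, List.length_map]

lemma mem_upsList_of_lt {X i : ℕ} (hiX : i ≤ X) {L : List ℕ}
    (hc : L.IsChain (fun a b => b = a + 1 ∨ a = b + 1)) (hl : L.getLast? = some X)
    {v : ℕ} (hv : v ∈ L) (hvi : v < i) : i ∈ upsList L := by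
  induction L generalizing v with
  | nil => simp at hv
  | cons a t ih =>
    cases t with
    | nil =>
      simp only [List.getLast?_singleton, Option.some_inj, List.mem_singleton] at hl hv
      omega
    | cons b t =>
      obtain ⟨hab, hc⟩ := List.isChain_cons_cons.mp hc
      rw [List.getLast?_cons_cons] at hl
      have ih' {w : ℕ} (hw : w ∈ b :: t) (hwi : w < i) : i ∈ upsList (a :: b :: t) := by
        rw [upsList_cons_cons]
        exact List.mem_append_right _ (ih hc hl hw hwi)
      rcases List.mem_cons.mp hv with rfl | hv
      · by_cases hbi : b < i
        · exact ih' List.mem_cons_self hbi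
        · have hb : b = v + 1 := by omega
          rw [upsList_cons_cons, if_pos hb]
          simp only [List.singleton_append, List.mem_cons]
          omega
      · exact ih' hv hvi

-- In `Xi`, `upsList L` is coerced to `List ℤ` (through the list monad) before the map.
lemma list_natCast_eq_map (l : List ℕ) : (l : List ℤ) = l.map ((↑) : ℕ → ℤ) :=
  List.flatMap_pure_eq_map _ _

lemma prod_upsList_sub_eq_zero {X Y i : ℕ} (hiX : i ≤ X) {L : List ℕ} (hL : IsTraj Y X L)
    {v : ℕ} (hv : v ∈ L) (hvi : v < i) :
    ((upsList L).map (fun v => (v : ℤ) - (i : ℤ))).prod = 0 := by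
  rw [list_natCast_eq_map, List.map_map]
  exact List.prod_eq_zero
    (List.mem_map.mpr ⟨i, mem_upsList_of_lt hiX hL.2.2 hL.2.1 hv hvi, sub_self _⟩)

lemma Omega_inter_le_eq_image (X Y S i : ℕ) :
    Omega (X + i) (Y + i) S ∩ {L | ∀ v ∈ L, i ≤ v} = List.map (· + i) '' Omega X Y S := by
  ext L
  constructor
  · rintro ⟨hL, hge⟩
    have hshift : (L.map (· - i)).map (· + i) = L := by
      rw [List.map_map]
      exact List.map_congr_left (fun v hv => Nat.sub_add_cancel (hge v hv)) |>.trans L.map_id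
    refine ⟨L.map (· - i), ?_, hshift⟩
    rw [← map_add_mem_Omega_iff, hshift]
    exact hL
  · rintro ⟨M, hM, rfl⟩
    exact ⟨map_add_mem_Omega_iff.mpr hM, by simp⟩

theorem Xi_add_add (X Y S i : ℕ) : Xi (X + i) (Y + i) S i = Xi X Y S 0 := by
  unfold Xi
  rw [finsum_mem_inter_support_eq' _ _ (Omega (X + i) (Y + i) S ∩ {L | ∀ v ∈ L, i ≤ v}),
    Omega_inter_le_eq_image,
    finsum_mem_image (List.map_injective_iff.mpr (add_left_injective i)).injOn]
  · refine finsum_congr fun M => finsum_congr fun _ => ?_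
    rw [upsList_map_add, list_natCast_eq_map, list_natCast_eq_map, List.map_map, List.map_map,
      List.map_map]
    congr 1
    exact List.map_congr_left fun v _ => by simp
  · intro L hL
    refine ⟨fun hΩ => ⟨hΩ, fun v hv => ?_⟩, And.left⟩
    by_contra! hvi
    exact hL (prod_upsList_sub_eq_zero (Nat.le_add_left i X) hΩ.1 hv hvi)

theorem stmt8 (X Y S i : ℕ) (hiX : i ≤ X) (hXY : X ≤ Y) :
    Xi X Y S i = Xi (X - i) (Y - i) S 0 := by
  obtain ⟨Y, rfl⟩ := Nat.exists_eq_add_of_le' (hiX.trans hXY)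
  obtain ⟨X, rfl⟩ := Nat.exists_eq_add_of_le' hiX
  simpa using Xi_add_add X Y S i
end

section
/- Define Ξ(X,Y,S) = Σ_{Δ ∈ Ω(X,Y,S)} ∏_{j=1}^{S} e(Δ,j), where Ω(X,Y,S) is the set of nonnegative ±1-step trajectories from Y to X with exactly S up-steps and e(Δ,j) is the height after the j-th up-step. Then for X ≥ 2 and S ≥ 1: Ξ(X,Y,S) = Ξ(X−1,Y,S) − (X−1)·Ξ(X−2,Y,S−1). -/
theorem isTraj_iff {Y X : ℕ} {L : List ℕ} :
    IsTraj Y X L ↔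
      L.head? = some Y ∧ L.getLast? = some X ∧ L.IsChain (fun a b => b = a + 1 ∨ a = b + 1) :=
  Iff.rfl

theorem zip_tail_concat {α : Type*} {a b : α} :
    ∀ {L : List α}, L.getLast? = some b → (L ++ [a]).zip (L ++ [a]).tail = L.zip L.tail ++ [(b, a)]
  | [], h => by simp at h
  | [_], h => by simp_all
  | _ :: y :: ys, h => by
    have ih := zip_tail_concat (a := a) (L := y :: ys) (by simpa using h)
    simp_all

theorem upsList_concat {L : List ℕ} {a b : ℕ} (h : L.getLast? = some b) :
    upsList (L ++ [a]) = upsList L ++ if a = b + 1 then [a] else [] := by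
  unfold upsList
  rw [zip_tail_concat h, List.filter_append, List.map_append]
  by_cases hab : a = b + 1 <;> simp [hab]

theorem upsList_concat_succ {L : List ℕ} {b : ℕ} (h : L.getLast? = some b) :
    upsList (L ++ [b + 1]) = upsList L ++ [b + 1] := by
  rw [upsList_concat h, if_pos rfl]

theorem upsList_concat_of_getLast?_eq_succ {L : List ℕ} {a : ℕ} (h : L.getLast? = some (a + 1)) :
    upsList (L ++ [a]) = upsList L := by
  rw [upsList_concat h, if_neg (by omega), List.append_nil]

theorem isTraj_concat_iff {L : List ℕ} {Y a b : ℕ} (hb : L.getLast? = some b) :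
    IsTraj Y a (L ++ [a]) ↔ IsTraj Y b L ∧ (a = b + 1 ∨ b = a + 1) := by
  have hne : L ≠ [] := by rintro rfl; simp at hb
  simp only [isTraj_iff, List.head?_append_of_ne_nil _ hne, List.isChain_append, hb]
  simp [and_assoc]

theorem isTraj_singleton_iff {Y X a : ℕ} : IsTraj Y X [a] ↔ a = Y ∧ a = X := by
  simp [isTraj_iff]

theorem IsTraj.length_add_eq {L : List ℕ} {Y X : ℕ} (h : IsTraj Y X L) :
    L.length + X = Y + 2 * (upsList L).length + 1 := by
  induction L using List.reverseRecOn generalizing X with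
  | nil => simp [isTraj_iff] at h
  | append_singleton L a ih =>
    obtain rfl : a = X := by simpa using h.2.1
    rcases hb : L.getLast? with _ | b
    · obtain rfl := List.getLast?_eq_none_iff.mp hb
      obtain ⟨rfl, -⟩ := isTraj_singleton_iff.mp h
      simp [upsList, add_comm]
    · obtain ⟨hL, hab | hab⟩ := (isTraj_concat_iff hb).mp h <;> have := ih hL <;> subst hab
      · simp only [upsList_concat_succ hb, List.length_append, List.length_singleton]; omega
      · simp only [upsList_concat_of_getLast?_eq_succ hb, List.length_append,
          List.length_singleton]; omega

theorem IsTraj.le_of_mem {L : List ℕ} {Y X z : ℕ} (h : IsTraj Y X L) (hz : z ∈ L) :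
    z ≤ Y + (upsList L).length := by
  induction L using List.reverseRecOn generalizing X z with
  | nil => simp at hz
  | append_singleton L a ih =>
    obtain rfl : a = X := by simpa using h.2.1
    rcases hb : L.getLast? with _ | b
    · obtain rfl := List.getLast?_eq_none_iff.mp hb
      obtain ⟨rfl, -⟩ := isTraj_singleton_iff.mp h
      simp_all
    · obtain ⟨hL, hab | hab⟩ := (isTraj_concat_iff hb).mp h <;>
        have hbY := ih hL (List.mem_of_getLast? hb) <;>
        obtain hz | rfl : z ∈ L ∨ z = a := by simpa using hz
      · have := ih hL hz
        rw [hab, upsList_concat_succ hb, List.length_append]; omega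
      · rw [hab, upsList_concat_succ hb, List.length_append, List.length_singleton]; omega
      · subst hab; rw [upsList_concat_of_getLast?_eq_succ hb]; exact ih hL hz
      · subst hab; rw [upsList_concat_of_getLast?_eq_succ hb]; omega

theorem finite_setOf_length_le_forall_le (N B : ℕ) :
    {L : List ℕ | L.length ≤ N ∧ ∀ z ∈ L, z ≤ B}.Finite := by
  refine ((List.finite_length_le (Set.Iic B) N).image (List.map Subtype.val)).subset ?_
  rintro L ⟨hN, hB⟩
  lift L to List (Set.Iic B) using hB
  exact ⟨L, by simpa using hN, rfl⟩

theorem omega_finite (X Y S : ℕ) : (Omega X Y S).Finite := by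
  refine (finite_setOf_length_le_forall_le (Y + 2 * S + 1) (Y + S)).subset ?_
  rintro L ⟨hL, rfl⟩
  exact ⟨by have := hL.length_add_eq; omega, fun z hz => hL.le_of_mem hz⟩

theorem omega_disjoint {a b : ℕ} (Y S T : ℕ) (hab : a ≠ b) :
    Disjoint (Omega a Y S) (Omega b Y T) :=
  Set.disjoint_left.mpr fun _ ha hb => hab <| Option.some_inj.mp (ha.1.2.1.symm.trans hb.1.2.1)

theorem concat_mem_omega_of_pred {L : List ℕ} {a Y S : ℕ} (h : L ∈ Omega (a + 1) Y S) :
    L ++ [a] ∈ Omega a Y S := by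
  obtain ⟨hL, rfl⟩ := h
  exact ⟨(isTraj_concat_iff hL.2.1).mpr ⟨hL, Or.inr rfl⟩,
    by rw [upsList_concat_of_getLast?_eq_succ hL.2.1]⟩

theorem concat_mem_omega_of_succ {L : List ℕ} {a Y S : ℕ} (h : L ∈ Omega a Y S) :
    L ++ [a + 1] ∈ Omega (a + 1) Y (S + 1) := by
  obtain ⟨hL, rfl⟩ := h
  exact ⟨(isTraj_concat_iff hL.2.1).mpr ⟨hL, Or.inl rfl⟩,
    by rw [upsList_concat_succ hL.2.1, List.length_append, List.length_singleton]⟩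

theorem omega_succ_succ (n Y S : ℕ) :
    Omega (n + 1) Y (S + 1) =
      (· ++ [n + 1]) '' Omega (n + 2) Y (S + 1) ∪ (· ++ [n + 1]) '' Omega n Y S := by
  ext M
  constructor
  · rintro ⟨hM, hS⟩
    obtain ⟨L, rfl⟩ := List.getLast?_eq_some_iff.mp hM.2.1
    rcases hb : L.getLast? with _ | b
    · simp [List.getLast?_eq_none_iff.mp hb, upsList] at hS
    obtain ⟨hL, hab | hab⟩ := (isTraj_concat_iff hb).mp hM
    · obtain rfl : b = n := by omega
      rw [upsList_concat_succ hb, List.length_append, List.length_singleton] at hS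
      exact Or.inr ⟨L, ⟨hL, by omega⟩, rfl⟩
    · subst hab
      rw [upsList_concat_of_getLast?_eq_succ hb] at hS
      exact Or.inl ⟨L, ⟨hL, hS⟩, rfl⟩
  · rintro (⟨L, hL, rfl⟩ | ⟨L, hL, rfl⟩)
    · exact concat_mem_omega_of_pred hL
    · exact concat_mem_omega_of_succ hL

theorem XiZ_succ_succ (n Y S : ℕ) :
    XiZ (n + 1) Y (S + 1) = XiZ (n + 2) Y (S + 1) + (n + 1 : ℕ) * XiZ n Y S := by
  have hinj : Function.Injective (· ++ [n + 1] : List ℕ → List ℕ) :=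
    fun _ _ h => List.append_cancel_right h
  rw [XiZ, omega_succ_succ,
    finsum_mem_union ((Set.disjoint_image_iff hinj).mpr (omega_disjoint Y _ _ (by omega)))
      ((omega_finite _ _ _).image _) ((omega_finite _ _ _).image _),
    finsum_mem_image hinj.injOn, finsum_mem_image hinj.injOn, XiZ, XiZ, mul_finsum_mem]
  congr 1
  · refine finsum_mem_congr rfl fun L hL => ?_
    rw [upsList_concat_of_getLast?_eq_succ hL.1.2.1]
  · refine finsum_mem_congr rfl fun L hL => ?_
    rw [upsList_concat_succ hL.1.2.1, List.prod_append, List.prod_singleton, Nat.cast_mul,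
      mul_comm]

theorem stmt10_general (X Y S : ℕ) (hX : 2 ≤ X) (hS : 1 ≤ S) :
    XiZ X Y S = XiZ (X - 1) Y S - (X - 1 : ℕ) * XiZ (X - 2) Y (S - 1) := by
  obtain ⟨n, rfl⟩ := Nat.exists_eq_add_of_le' hX
  obtain ⟨s, rfl⟩ := Nat.exists_eq_add_of_le' hS
  rw [show n + 2 - 1 = n + 1 by omega, Nat.add_sub_cancel, Nat.add_sub_cancel, XiZ_succ_succ n]
  ring

theorem stmt10 (X Y S : ℕ) (hX : 2 ≤ X) (hS : 1 ≤ S) (hXY : X ≤ Y) :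
    XiZ X Y S = XiZ (X - 1) Y S - (X - 1 : ℕ) * XiZ (X - 2) Y (S - 1) :=
  stmt10_general X Y S hX hS
end

section
/- In the Young–Fibonacci graph, for any vertex y (a word over {1,2}), the set of children of y (covers of y from above obtained by the two operations: replace the leftmost 1 by 2, or insert a 1 to the left of the leftmost 1) equals the set of parents of the word 2y (covers of 2y from below). -/
/-- Index of the leftmost `1` in a word (equals the length if there is no `1`). -/
def firstOnePos (w : List ℕ) : ℕ := w.findIdx (fun d => d == 1)

/-- The vertices covering `y` in the Young–Fibonacci graph: insert a `1` anywhere to the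
left of the leftmost `1`, or replace the leftmost `1` by a `2`. -/
def children (y : List ℕ) : Set (List ℕ) :=
  {u | (∃ j, j ≤ firstOnePos y ∧ j ≤ y.length ∧ u = y.take j ++ 1 :: y.drop j) ∨
       (firstOnePos y < y.length ∧ u = y.set (firstOnePos y) 2)}

/-- The vertices covered by `w` in the Young–Fibonacci graph: replace one of the `2`s
preceding the first `1` by a `1`, or delete the first `1`. -/
def parents (w : List ℕ) : Set (List ℕ) :=
  {u | (∃ j, j < firstOnePos w ∧ u = w.set j 1) ∨
       (firstOnePos w < w.length ∧
         u = w.take (firstOnePos w) ++ w.drop (firstOnePos w + 1))}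

/-!
Before its first `1`, a word over `{1, 2}` is a block of `2`s. Prepending a `2` to it and then
turning the `j`-th letter of `2y` into a `1` therefore gives the same word as inserting a `1` at
position `j` of `y`; likewise deleting the first `1` of `2y` is the same as shifting the block of
`2`s one step right, i.e. as turning the first `1` of `y` into a `2`.
-/

namespace List

variable {α : Type*}

theorem cons_set_eq_take_append_cons_drop {c b : α} :
    ∀ {l : List α} {j : ℕ}, j ≤ l.length → (∀ a ∈ l.take j, a = c) →
      (c :: l).set j b = l.take j ++ b :: l.drop j
  | _, 0, _, _ => rfl
  | a :: l, j + 1, hj, h => by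
    obtain rfl : a = c := h a (by simp)
    have ih := cons_set_eq_take_append_cons_drop (b := b) (l := l) (j := j) (by simpa using hj)
      fun x hx => h x (by simp [hx])
    simp [ih]

theorem set_eq_cons_take_append_drop_succ {c : α} :
    ∀ {l : List α} {j : ℕ}, j < l.length → (∀ a ∈ l.take j, a = c) →
      l.set j c = c :: (l.take j ++ l.drop (j + 1))
  | _ :: _, 0, _, _ => rfl
  | a :: l, j + 1, hj, h => by
    obtain rfl : a = c := h a (by simp)
    have ih := set_eq_cons_take_append_drop_succ (c := a) (l := l) (j := j) (by simpa using hj)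
      fun x hx => h x (by simp [hx])
    simp [ih]

end List

theorem firstOnePos_cons_two (y : List ℕ) : firstOnePos (2 :: y) = firstOnePos y + 1 := by
  simp [firstOnePos, List.findIdx_cons]

theorem firstOnePos_le_length (y : List ℕ) : firstOnePos y ≤ y.length :=
  List.findIdx_le_length

theorem eq_two_of_mem_take_firstOnePos {y : List ℕ} (hy : ∀ d ∈ y, d = 1 ∨ d = 2) :
    ∀ d ∈ y.take (firstOnePos y), d = 2 := by
  intro d hd
  obtain ⟨i, hi, rfl⟩ := List.mem_take_iff_getElem.mp hd
  have hne : y[i] ≠ 1 := by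
    simpa using List.not_of_lt_findIdx (lt_of_lt_of_le hi (min_le_left _ _))
  exact (hy _ (List.getElem_mem _)).resolve_left hne

theorem stmt17 (y : List ℕ) (hy : ∀ d ∈ y, d = 1 ∨ d = 2) :
    children y = parents (2 :: y) := by
  set p := firstOnePos y with hp
  have hpl : p ≤ y.length := firstOnePos_le_length y
  have htwos : ∀ j ≤ p, ∀ d ∈ y.take j, d = 2 := fun j hj d hd =>
    eq_two_of_mem_take_firstOnePos hy d (List.take_subset_take_left y hj hd)
  ext u
  simp only [children, parents, Set.mem_ofPred_eq, firstOnePos_cons_two, ← hp]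
  refine or_congr ⟨?_, ?_⟩ ⟨?_, ?_⟩
  · rintro ⟨j, hjp, hjl, rfl⟩
    exact ⟨j, Nat.lt_succ_of_le hjp,
      (List.cons_set_eq_take_append_cons_drop hjl (htwos j hjp)).symm⟩
  · rintro ⟨j, hjp, rfl⟩
    have hjp : j ≤ p := Nat.le_of_lt_succ hjp
    exact ⟨j, hjp, hjp.trans hpl,
      List.cons_set_eq_take_append_cons_drop (hjp.trans hpl) (htwos j hjp)⟩
  · rintro ⟨hlt, rfl⟩
    refine ⟨by simpa using hlt, ?_⟩
    rw [List.set_eq_cons_take_append_drop_succ hlt (htwos p le_rfl)]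
    simp
  · rintro ⟨hlt, rfl⟩
    have hlt : p < y.length := by simpa using hlt
    refine ⟨hlt, ?_⟩
    rw [List.set_eq_cons_take_append_drop_succ hlt (htwos p le_rfl)]
    simp
end

section
/- Let x be a word over {1,2} and S a natural number. The number of paths of length |x| + 2S in the Young–Fibonacci graph from x down to the empty word ε that use exactly S upward edges (and |x| + S downward edges), staying in the graph at all times, equals C(|x|+2S, |x|) · (2S−1)!! · ∏_{j=1}^{d(x)} g(x,j), with (−1)!! = 1. -/
lemma firstOnePos_cons (a : ℕ) (t : List ℕ) :
    firstOnePos (a :: t) = if a = 1 then 0 else firstOnePos t + 1 := by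
  simp [firstOnePos, List.findIdx_cons, Bool.cond_eq_ite]

lemma mem_children_nil (u : List ℕ) : u ∈ children [] ↔ u = [1] := by
  simp [children, firstOnePos]

lemma mem_children_one_cons (t u : List ℕ) :
    u ∈ children (1 :: t) ↔ u = 1 :: 1 :: t ∨ u = 2 :: t := by
  simp [children, firstOnePos_cons]

lemma mem_children_cons_of_ne_one {a : ℕ} (ha : a ≠ 1) (t u : List ℕ) :
    u ∈ children (a :: t) ↔ u = 1 :: a :: t ∨ ∃ v ∈ children t, u = a :: v := by
  have hf : firstOnePos (a :: t) = firstOnePos t + 1 := by simp [firstOnePos_cons, ha]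
  constructor
  · rintro (⟨j, hj1, hj2, rfl⟩ | ⟨h1, rfl⟩)
    · rw [hf] at hj1
      rcases j with _ | j
      · simp
      · exact Or.inr ⟨_, Or.inl ⟨j, by omega, by simpa using hj2, rfl⟩, by simp⟩
    · exact Or.inr ⟨_, Or.inr ⟨by simpa [hf] using h1, rfl⟩, by simp [hf]⟩
  · rintro (rfl | ⟨v, (⟨j, hj1, hj2, rfl⟩ | ⟨h1, rfl⟩), rfl⟩)
    · exact Or.inl ⟨0, by simp⟩
    · exact Or.inl ⟨j + 1, by omega, by simpa using hj2, by simp⟩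
    · exact Or.inr ⟨by simpa [hf] using h1, by simp [hf]⟩

lemma one_cons_mem_children (t u : List ℕ) : 1 :: t ∈ children u ↔ u = t := by
  rcases u with _ | ⟨c, s⟩
  · simp [mem_children_nil, eq_comm]
  · by_cases hc : c = 1
    · subst hc; simp [mem_children_one_cons, eq_comm]
    · simpa [mem_children_cons_of_ne_one hc, eq_comm] using fun _ h => absurd h hc

lemma cons_mem_children_of_ne_one {a : ℕ} (ha : a ≠ 1) (t u : List ℕ) :
    a :: t ∈ children u ↔ (a = 2 ∧ u = 1 :: t) ∨ ∃ s, u = a :: s ∧ t ∈ children s := by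
  rcases u with _ | ⟨c, s⟩
  · simp [mem_children_nil, ha]
  · by_cases hc : c = 1
    · subst hc; simp [mem_children_one_cons, ha, eq_comm]
    · simp [mem_children_cons_of_ne_one hc, ha, hc, eq_comm, and_comm]

def upperCovers : List ℕ → Finset (List ℕ)
  | [] => {[1]}
  | a :: t => if a = 1 then {1 :: 1 :: t, 2 :: t}
      else insert (1 :: a :: t) ((upperCovers t).image (a :: ·))

lemma upperCovers_one_cons (t : List ℕ) : upperCovers (1 :: t) = {1 :: 1 :: t, 2 :: t} := by
  simp [upperCovers]

lemma upperCovers_cons_of_ne_one {a : ℕ} (ha : a ≠ 1) (t : List ℕ) :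
    upperCovers (a :: t) = insert (1 :: a :: t) ((upperCovers t).image (a :: ·)) := by
  simp [upperCovers, ha]

lemma mem_upperCovers (x u : List ℕ) : u ∈ upperCovers x ↔ u ∈ children x := by
  induction x generalizing u with
  | nil => simp [upperCovers, mem_children_nil]
  | cons a t ih =>
    by_cases ha : a = 1
    · subst ha
      simp [upperCovers, mem_children_one_cons]
    · simp [upperCovers, mem_children_cons_of_ne_one ha, ha, ih, eq_comm]

lemma sum_eq_of_mem_children {x u : List ℕ} (h : u ∈ children x) : u.sum = x.sum + 1 := by
  rw [← mem_upperCovers] at h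
  induction x generalizing u with
  | nil => simp_all [upperCovers]
  | cons a t ih =>
    by_cases ha : a = 1
    · subst ha
      simp only [upperCovers_one_cons, Finset.mem_insert, Finset.mem_singleton] at h
      rcases h with rfl | rfl <;> simp <;> omega
    · simp only [upperCovers_cons_of_ne_one ha, Finset.mem_insert, Finset.mem_image] at h
      rcases h with rfl | ⟨v, hv, rfl⟩
      · simp; omega
      · simp [ih hv]; omega

def lowerCovers : List ℕ → Finset (List ℕ)
  | [] => ∅
  | a :: t => if a = 1 then {t}
      else if a = 2 then insert (1 :: t) ((lowerCovers t).image (a :: ·))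
      else (lowerCovers t).image (a :: ·)

lemma lowerCovers_one_cons (t : List ℕ) : lowerCovers (1 :: t) = {t} := by
  simp [lowerCovers]

lemma lowerCovers_two_cons (t : List ℕ) :
    lowerCovers (2 :: t) = insert (1 :: t) ((lowerCovers t).image (2 :: ·)) := by
  simp [lowerCovers]

lemma mem_lowerCovers (x u : List ℕ) : u ∈ lowerCovers x ↔ x ∈ children u := by
  induction x generalizing u with
  | nil => simpa [lowerCovers] using fun h => by simpa using sum_eq_of_mem_children h
  | cons a t ih =>
    by_cases ha : a = 1
    · subst ha
      simp [lowerCovers, one_cons_mem_children]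
    · by_cases ha2 : a = 2
      · subst ha2
        simp [lowerCovers, cons_mem_children_of_ne_one, ih, eq_comm, and_comm]
      · simp [lowerCovers, cons_mem_children_of_ne_one ha, ha, ha2, ih, eq_comm, and_comm]

def IsYFWord (x : List ℕ) : Prop := ∀ d ∈ x, d = 1 ∨ d = 2

lemma isYFWord_cons {a : ℕ} {t : List ℕ} : IsYFWord (a :: t) ↔ (a = 1 ∨ a = 2) ∧ IsYFWord t :=
  List.forall_mem_cons

lemma IsYFWord.eq_nil_of_sum_eq_zero {x : List ℕ} (hx : IsYFWord x) (h : x.sum = 0) : x = [] :=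
  List.eq_nil_iff_forall_not_mem.2 fun d hd => by
    have := List.sum_eq_zero_iff.1 h d hd
    rcases hx d hd with rfl | rfl <;> simp at this

lemma IsYFWord.of_mem_upperCovers {x u : List ℕ} (hx : IsYFWord x) (h : u ∈ upperCovers x) :
    IsYFWord u := by
  induction x generalizing u with
  | nil => simp_all [upperCovers, IsYFWord]
  | cons a t ih =>
    rw [isYFWord_cons] at hx
    by_cases ha : a = 1
    · subst ha
      simp [upperCovers] at h
      rcases h with rfl | rfl <;> simp [isYFWord_cons, hx.2]
    · simp only [upperCovers_cons_of_ne_one ha, Finset.mem_insert, Finset.mem_image] at h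
      rcases h with rfl | ⟨v, hv, rfl⟩
      · simp [isYFWord_cons, hx]
      · simp [isYFWord_cons, hx.1, ih hx.2 hv]

lemma IsYFWord.of_mem_lowerCovers {x u : List ℕ} (hx : IsYFWord x) (h : u ∈ lowerCovers x) :
    IsYFWord u := by
  induction x generalizing u with
  | nil => simp [lowerCovers] at h
  | cons a t ih =>
    rw [isYFWord_cons] at hx
    rcases hx with ⟨rfl | rfl, ht⟩
    · simp_all [lowerCovers_one_cons]
    · simp only [lowerCovers_two_cons, Finset.mem_insert, Finset.mem_image] at h
      rcases h with rfl | ⟨v, hv, rfl⟩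
      · simp [isYFWord_cons, ht]
      · simp [isYFWord_cons, ih ht hv]

def gProd : List ℕ → ℕ
  | [] => 1
  | a :: t => (if a = 2 then t.sum + 1 else 1) * gProd t

lemma gProd_one_cons (t : List ℕ) : gProd (1 :: t) = gProd t := by simp [gProd]

lemma gProd_two_cons (t : List ℕ) : gProd (2 :: t) = (t.sum + 1) * gProd t := by simp [gProd]

lemma takeBefore2_cons_of_ne_two {a : ℕ} (ha : a ≠ 2) (m : ℕ) (t : List ℕ) :
    takeBefore2 m (a :: t) = a :: takeBefore2 m t := by
  simp [takeBefore2, ha]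

lemma takeBefore2_append {m : ℕ} {l : List ℕ} (r : List ℕ) (h1 : 1 ≤ m) (h2 : m ≤ l.count 2) :
    takeBefore2 m (l ++ r) = takeBefore2 m l := by
  induction l generalizing m with
  | nil => simp at h2; omega
  | cons a t ih =>
    by_cases ha : a = 2
    · subst ha
      by_cases hm : m ≤ 1
      · simp [takeBefore2, hm]
      · simp only [List.count_cons_self] at h2
        simp [takeBefore2, hm, ih (m := m - 1) (by omega) (by omega)]
    · simp only [List.count_cons, ha, beq_iff_eq, if_false, add_zero] at h2
      simp [takeBefore2_cons_of_ne_two ha, ih h1 h2]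

lemma takeBefore2_count_add_one (l r : List ℕ) :
    takeBefore2 (l.count 2 + 1) (l ++ 2 :: r) = l := by
  induction l with
  | nil => simp [takeBefore2]
  | cons a t ih =>
    by_cases ha : a = 2
    · subst ha
      simpa [takeBefore2] using ih
    · simpa [List.count_cons, ha, takeBefore2_cons_of_ne_two ha] using ih

lemma gval_cons {a : ℕ} {t : List ℕ} {j : ℕ} (h1 : 1 ≤ j) (h2 : j ≤ t.count 2) :
    gval (a :: t) j = gval t j := by
  rw [gval, gval, List.reverse_cons, takeBefore2_append [a] h1 (by rwa [List.count_reverse])]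

lemma gval_two_cons_count_add_one (t : List ℕ) : gval (2 :: t) (t.count 2 + 1) = t.sum + 1 := by
  have h := takeBefore2_count_add_one t.reverse []
  rw [List.count_reverse] at h
  rw [gval, List.reverse_cons, h, List.sum_reverse, add_comm]

lemma gProd_eq_prod_gval (x : List ℕ) : gProd x = ∏ j ∈ Finset.Icc 1 (x.count 2), gval x j := by
  induction x with
  | nil => simp [gProd]
  | cons a t ih =>
    have hprod : ∏ j ∈ Finset.Icc 1 (t.count 2), gval (a :: t) j = gProd t := by
      rw [ih]
      exact Finset.prod_congr rfl fun j hj =>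
        gval_cons (Finset.mem_Icc.1 hj).1 (Finset.mem_Icc.1 hj).2
    by_cases ha : a = 2
    · subst ha
      rw [List.count_cons_self, Finset.prod_Icc_succ_top (by omega), hprod,
        gval_two_cons_count_add_one, gProd_two_cons, mul_comm]
    · simp [ha, hprod, gProd]

lemma sum_image_cons {α M : Type*} [DecidableEq α] [AddCommMonoid M] (s : Finset (List α))
    (c : α) (f : List α → M) :
    ∑ y ∈ s.image (c :: ·), f y = ∑ v ∈ s, f (c :: v) :=
  Finset.sum_image fun _ _ _ _ h => List.cons_injective h

lemma cons_notMem_image_cons {α : Type*} [DecidableEq α] {b c : α} (h : b ≠ c) (t : List α)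
    (s : Finset (List α)) :
    b :: t ∉ s.image (c :: ·) := by
  simp [Ne.symm h]

lemma sum_gProd_lowerCovers {x : List ℕ} (hx : IsYFWord x) (hne : x ≠ []) :
    ∑ y ∈ lowerCovers x, gProd y = gProd x := by
  induction x with
  | nil => exact absurd rfl hne
  | cons a t ih =>
    rcases isYFWord_cons.1 hx with ⟨rfl | rfl, ht⟩
    · simp [lowerCovers_one_cons, gProd_one_cons]
    · rw [lowerCovers_two_cons, Finset.sum_insert (cons_notMem_image_cons (by omega) _ _),
        sum_image_cons, gProd_one_cons, gProd_two_cons]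
      rcases eq_or_ne t [] with rfl | ht0
      · simp [lowerCovers, gProd]
      · have hsum : ∑ v ∈ lowerCovers t, gProd (2 :: v) = t.sum * gProd t := by
          rw [← ih ht ht0, Finset.mul_sum]
          refine Finset.sum_congr rfl fun v hv => ?_
          rw [gProd_two_cons, sum_eq_of_mem_children ((mem_lowerCovers t v).1 hv)]
        rw [hsum]
        ring

lemma sum_gProd_upperCovers {x : List ℕ} (hx : IsYFWord x) :
    ∑ y ∈ upperCovers x, gProd y = (x.sum + 1) * gProd x := by
  induction x with
  | nil => simp [upperCovers, gProd]
  | cons a t ih =>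
    rcases isYFWord_cons.1 hx with ⟨rfl | rfl, ht⟩
    · rw [upperCovers_one_cons, Finset.sum_pair (by simp), gProd_one_cons, gProd_one_cons,
        gProd_two_cons, List.sum_cons]
      ring
    · rw [upperCovers_cons_of_ne_one (by omega),
        Finset.sum_insert (cons_notMem_image_cons (by omega) _ _), sum_image_cons,
        gProd_one_cons, gProd_two_cons]
      have hsum : ∑ v ∈ upperCovers t, gProd (2 :: v) = (t.sum + 2) * ((t.sum + 1) * gProd t) := by
        rw [← ih ht, Finset.mul_sum]
        refine Finset.sum_congr rfl fun v hv => ?_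
        rw [gProd_two_cons, sum_eq_of_mem_children ((mem_upperCovers t v).1 hv)]
      rw [hsum, List.sum_cons]
      ring

def YFAdj (a b : List ℕ) : Prop := a ∈ children b ∨ b ∈ children a

def walksToNil : ℕ → List ℕ → Finset (List (List ℕ))
  | 0, x => if x = [] then {[[]]} else ∅
  | L + 1, x => (lowerCovers x ∪ upperCovers x).biUnion fun y => (walksToNil L y).image (x :: ·)

lemma mem_walksToNil_zero {x : List ℕ} {P : List (List ℕ)} :
    P ∈ walksToNil 0 x ↔ x = [] ∧ P = [[]] := by
  by_cases hx : x = [] <;> simp [walksToNil, hx]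

lemma mem_walksToNil_succ {L : ℕ} {x : List ℕ} {P : List (List ℕ)} :
    P ∈ walksToNil (L + 1) x ↔ ∃ y, YFAdj x y ∧ ∃ Q ∈ walksToNil L y, P = x :: Q := by
  simp [walksToNil, mem_lowerCovers, mem_upperCovers, YFAdj, eq_comm]

lemma head?_of_mem_walksToNil {L : ℕ} {x : List ℕ} {P : List (List ℕ)}
    (h : P ∈ walksToNil L x) : P.head? = some x := by
  cases L with
  | zero => obtain ⟨rfl, rfl⟩ := mem_walksToNil_zero.1 h; rfl
  | succ L => obtain ⟨_, _, _, _, rfl⟩ := mem_walksToNil_succ.1 h; rfl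

lemma mem_walksToNil {L : ℕ} {x : List ℕ} {P : List (List ℕ)} :
    P ∈ walksToNil L x ↔
      P.head? = some x ∧ P.getLast? = some [] ∧ P.length = L + 1 ∧ P.IsChain YFAdj := by
  induction L generalizing x P with
  | zero =>
    rw [mem_walksToNil_zero]
    constructor
    · rintro ⟨rfl, rfl⟩
      simp
    · rintro ⟨h1, h2, h3, -⟩
      obtain ⟨b, rfl⟩ := List.length_eq_one_iff.1 h3
      simp_all
  | succ L ih =>
    rw [mem_walksToNil_succ]
    constructor
    · rintro ⟨y, hxy, Q, hQ, rfl⟩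
      obtain ⟨h1, h2, h3, h4⟩ := ih.1 hQ
      obtain ⟨z, Q, rfl⟩ := List.exists_cons_of_ne_nil (List.ne_nil_of_length_eq_add_one h3)
      obtain rfl : z = y := by simpa using h1
      exact ⟨rfl, by rwa [List.getLast?_cons_cons], by simpa using h3,
        List.isChain_cons_cons.2 ⟨hxy, h4⟩⟩
    · rintro ⟨h1, h2, h3, h4⟩
      obtain ⟨x', y, Q, rfl⟩ : ∃ x' y Q, P = x' :: y :: Q := by
        match P, h3 with
        | x' :: y :: Q, _ => exact ⟨x', y, Q, rfl⟩
      obtain rfl : x' = x := by simpa using h1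
      obtain ⟨hxy, hc⟩ := List.isChain_cons_cons.1 h4
      refine ⟨y, hxy, y :: Q, ih.2 ⟨rfl, ?_, by simpa using h3, hc⟩, rfl⟩
      rwa [List.getLast?_cons_cons] at h2

lemma card_walksToNil_succ (L : ℕ) (x : List ℕ) :
    (walksToNil (L + 1) x).card =
      ∑ y ∈ lowerCovers x, (walksToNil L y).card + ∑ y ∈ upperCovers x, (walksToNil L y).card := by
  have hdisj : Disjoint (lowerCovers x) (upperCovers x) := by
    refine Finset.disjoint_left.2 fun y hl hu => ?_
    have := sum_eq_of_mem_children ((mem_lowerCovers x y).1 hl)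
    have := sum_eq_of_mem_children ((mem_upperCovers x y).1 hu)
    omega
  rw [walksToNil, Finset.card_biUnion, Finset.sum_union hdisj]
  · simp only [Finset.card_image_of_injective _ List.cons_injective]
  · intro y₁ _ y₂ _ hne
    refine Finset.disjoint_left.2 fun P h₁ h₂ => hne ?_
    obtain ⟨Q, hQ₁, rfl⟩ := Finset.mem_image.1 h₁
    obtain ⟨Q', hQ₂, hQ⟩ := Finset.mem_image.1 h₂
    obtain rfl := List.cons_injective hQ
    simpa [head?_of_mem_walksToNil hQ₁] using head?_of_mem_walksToNil hQ₂

lemma YFAdj.sum_eq {a b : List ℕ} (h : YFAdj a b) : a.sum = b.sum + 1 ∨ b.sum = a.sum + 1 :=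
  h.imp sum_eq_of_mem_children sum_eq_of_mem_children

lemma length_eq_of_isChain_yfAdj {P : List (List ℕ)} {x : List ℕ} (hc : P.IsChain YFAdj)
    (hh : P.head? = some x) (hl : P.getLast? = some []) :
    P.length =
      2 * ((P.zip P.tail).filter (fun p => p.2.sum == p.1.sum + 1)).length + x.sum + 1 := by
  induction P generalizing x with
  | nil => simp at hh
  | cons a Q ih =>
    obtain rfl : a = x := by simpa using hh
    cases Q with
    | nil =>
      obtain rfl : a = [] := by simpa using hl
      simp
    | cons y R =>
      obtain ⟨hay, hc⟩ := List.isChain_cons_cons.1 hc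
      have ih := ih hc rfl (by rwa [List.getLast?_cons_cons] at hl)
      simp only [List.tail_cons, List.zip_cons_cons, List.filter_cons, List.length_cons] at ih ⊢
      rcases hay.sum_eq with h | h
      · rw [if_neg (by simp; omega)]
        omega
      · rw [if_pos (by simp [h])]
        simp only [List.length_cons]
        omega

lemma walksToNil_eq_empty {L : ℕ} {x : List ℕ} (h : L < x.sum) : walksToNil L x = ∅ := by
  refine Finset.eq_empty_of_forall_notMem fun P hP => ?_
  obtain ⟨h1, h2, h3, h4⟩ := mem_walksToNil.1 hP
  have := length_eq_of_isChain_yfAdj h4 h1 h2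
  omega

lemma mem_walksToNil_sum_add_two_mul {x : List ℕ} {S : ℕ} {P : List (List ℕ)} :
    P ∈ walksToNil (x.sum + 2 * S) x ↔
      P.head? = some x ∧ P.getLast? = some [] ∧ P.length = x.sum + 2 * S + 1 ∧
        P.IsChain YFAdj ∧ ((P.zip P.tail).filter (fun p => p.2.sum == p.1.sum + 1)).length = S := by
  rw [mem_walksToNil]
  refine ⟨fun ⟨h1, h2, h3, h4⟩ => ⟨h1, h2, h3, h4, ?_⟩, fun ⟨h1, h2, h3, h4, _⟩ => ⟨h1, h2, h3, h4⟩⟩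
  have := length_eq_of_isChain_yfAdj h4 h1 h2
  omega

def walkCoeff (n S : ℕ) : ℕ := (n + 2 * S).choose n * (2 * S - 1).doubleFactorial

lemma walkCoeff_zero_right (n : ℕ) : walkCoeff n 0 = 1 := by simp [walkCoeff]

lemma walkCoeff_zero_succ (S : ℕ) : walkCoeff 0 (S + 1) = walkCoeff 1 S := by
  simp only [walkCoeff, Nat.choose_zero_right, Nat.choose_one_right, one_mul,
    show 2 * (S + 1) - 1 = 2 * S + 1 by omega, Nat.doubleFactorial_add_one (2 * S)]
  ring_nf

lemma walkCoeff_succ_succ (n S : ℕ) :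
    walkCoeff (n + 1) (S + 1) = walkCoeff n (S + 1) + (n + 2) * walkCoeff (n + 2) S := by
  have hpascal : (n + 2 * S + 3).choose (n + 1) =
      (n + 2 * S + 2).choose n + (n + 2 * S + 2).choose (n + 1) := Nat.choose_succ_succ _ _
  have habsorb : (n + 2 * S + 2).choose (n + 2) * (n + 2) =
      (n + 2 * S + 2).choose (n + 1) * (2 * S + 1) := by
    rw [Nat.choose_succ_right_eq]
    congr 1
    omega
  simp only [walkCoeff, show 2 * (S + 1) - 1 = 2 * S + 1 by omega,
    show n + 1 + 2 * (S + 1) = n + 2 * S + 3 by ring, show n + 2 * (S + 1) = n + 2 * S + 2 by ring,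
    show n + 2 + 2 * S = n + 2 * S + 2 by ring, Nat.doubleFactorial_add_one (2 * S), hpascal]
  rw [show ∀ a b : ℕ, (n + 2) * (a * b) = a * (n + 2) * b by intros; ring, habsorb]
  ring

lemma card_walksToNil {x : List ℕ} (hx : IsYFWord x) (S : ℕ) :
    (walksToNil (x.sum + 2 * S) x).card = walkCoeff x.sum S * gProd x := by
  suffices ∀ L x S, IsYFWord x → x.sum + 2 * S = L →
      (walksToNil L x).card = walkCoeff x.sum S * gProd x from this _ x S hx rfl
  intro L
  induction L with
  | zero =>
    intro x S hx hL
    obtain rfl := hx.eq_nil_of_sum_eq_zero (by omega)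
    obtain rfl : S = 0 := by simpa using hL
    simp [walksToNil, walkCoeff, gProd]
  | succ L ih =>
    intro x S hx hL
    have hdown : ∀ n, x.sum = n + 1 →
        ∑ y ∈ lowerCovers x, (walksToNil L y).card = walkCoeff n S * gProd x := by
      intro n hn
      have hne : x ≠ [] := by rintro rfl; simp at hn
      rw [← sum_gProd_lowerCovers hx hne, Finset.mul_sum]
      refine Finset.sum_congr rfl fun y hy => ?_
      have hy' := sum_eq_of_mem_children ((mem_lowerCovers x y).1 hy)
      rw [ih y S (hx.of_mem_lowerCovers hy) (by omega), show y.sum = n by omega]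
    have hup : ∀ S', S = S' + 1 → ∑ y ∈ upperCovers x, (walksToNil L y).card =
        walkCoeff (x.sum + 1) S' * ((x.sum + 1) * gProd x) := by
      intro S' hS
      rw [← sum_gProd_upperCovers hx, Finset.mul_sum]
      refine Finset.sum_congr rfl fun y hy => ?_
      have hy' := sum_eq_of_mem_children ((mem_upperCovers x y).1 hy)
      rw [ih y S' (hx.of_mem_upperCovers hy) (by omega), hy']
    rw [card_walksToNil_succ]
    rcases S with _ | S
    · -- no upward step fits: from an upper cover, `L` steps are too few to reach `[]`
      have hup0 : ∑ y ∈ upperCovers x, (walksToNil L y).card = 0 :=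
        Finset.sum_eq_zero fun y hy => by
          have := sum_eq_of_mem_children ((mem_upperCovers x y).1 hy)
          rw [walksToNil_eq_empty (by omega), Finset.card_empty]
      rw [hdown L (by omega), hup0, walkCoeff_zero_right, walkCoeff_zero_right, add_zero]
    · rw [hup S rfl]
      cases hs : x.sum with
      | zero =>
        obtain rfl := hx.eq_nil_of_sum_eq_zero hs
        simp [lowerCovers, gProd, walkCoeff_zero_succ]
      | succ n =>
        rw [hdown n hs, walkCoeff_succ_succ]
        ring

theorem stmt19 (x : List ℕ) (hx : ∀ d ∈ x, d = 1 ∨ d = 2) (S : ℕ) :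
    Nat.card {P : List (List ℕ) //
        P.head? = some x ∧ P.getLast? = some ([] : List ℕ) ∧
        P.length = x.sum + 2 * S + 1 ∧
        P.Chain' (fun a b => a ∈ children b ∨ b ∈ children a) ∧
        ((P.zip P.tail).filter (fun p => p.2.sum == p.1.sum + 1)).length = S} =
      Nat.choose (x.sum + 2 * S) x.sum * Nat.doubleFactorial (2 * S - 1) *
        ∏ j ∈ Finset.Icc 1 (x.count 2), gval x j := by
  calc Nat.card _ = (walksToNil (x.sum + 2 * S) x).card := by
        rw [← Nat.card_eq_finsetCard]
        exact Nat.card_congr (Equiv.subtypeEquivRight fun P => mem_walksToNil_sum_add_two_mul.symm)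
    _ = _ := by rw [card_walksToNil hx S, walkCoeff, gProd_eq_prod_gval]
end
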